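/- Let ζ > 0 and let (μ, φ) be an eigenpair of the beam problem. Then μ > 0. -/

import Mathlib

/-!
Multiplying the equation by `φ` and integrating by parts (twice, resp. three times) gives
`μ ∫ φ² = ∫ φ''² + ζ ∫ φ'''²`, all boundary terms cancelling by the boundary conditions.
If `φ''` vanished identically, then `φ(0) = φ'(0) = 0` would force `φ ≡ 0`; hence `∫ φ''² > 0`,
and since `ζ > 0` the right-hand side is positive, so `μ > 0`.
-/


open Set MeasureTheory intervalIntegral

/-- `Dv m f x` is the `m`-th derivative of `f` on the interval `[0,1]`. -/
noncomputable def Dv (m : ℕ) (f : ℝ → ℝ) (x : ℝ) : ℝ :=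
  iteratedDerivWithin m f (Icc (0:ℝ) 1) x

/-- The beam boundary conditions. -/
def BeamBC (ζ : ℝ) (f : ℝ → ℝ) : Prop :=
  f 0 = 0 ∧ Dv 1 f 0 = 0 ∧ Dv 2 f 0 = 0 ∧
  Dv 2 f 1 - ζ * Dv 4 f 1 = 0 ∧
  ζ * Dv 5 f 1 - Dv 3 f 1 = 0 ∧
  ζ * Dv 3 f 1 = 0

/-- An eigenpair `(μ, φ)` of the beam problem. -/
def BeamEigenpair (ζ μ : ℝ) (φ : ℝ → ℝ) : Prop :=
  ContDiffOn ℝ 6 φ (Icc (0:ℝ) 1) ∧ BeamBC ζ φ ∧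
  (¬ ∀ x ∈ Icc (0:ℝ) 1, φ x = 0) ∧
  (∀ x ∈ Icc (0:ℝ) 1, Dv 4 φ x - ζ * Dv 6 φ x = μ * φ x)

/-!
Multiplying the equation by `φ` and integrating by parts (twice, resp. three times) gives
`μ ∫ φ² = ∫ φ''² + ζ ∫ φ'''²`, all boundary terms cancelling by the boundary conditions.
If `φ''` vanished identically, then `φ(0) = φ'(0) = 0` would force `φ ≡ 0`; hence `∫ φ''² > 0`,
and since `ζ > 0` the right-hand side is positive, so `μ > 0`.
-/

section IntegrationByParts

variable {a b : ℝ} {u : ℕ → ℝ → ℝ}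

theorem integral_deriv_four_mul_eq (hab : a ≤ b)
    (hcont : ∀ m ≤ 4, ContinuousOn (u m) (Icc a b))
    (hderiv : ∀ m < 4, ∀ x ∈ Ioo a b, HasDerivAt (u m) (u (m + 1) x) x) :
    ∫ x in a..b, u 4 x * u 0 x =
      (u 3 b * u 0 b - u 2 b * u 1 b) - (u 3 a * u 0 a - u 2 a * u 1 a) +
        ∫ x in a..b, u 2 x ^ 2 := by
  have hint : ∀ m ≤ 4, ∀ n ≤ 4, IntervalIntegrable (fun x => u m x * u n x) volume a b :=
    fun m hm n hn => ((hcont m hm).mul (hcont n hn)).intervalIntegrable_of_Icc hab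
  have hftc : ∫ x in a..b, (u 4 x * u 0 x - u 2 x * u 2 x) =
      (u 3 b * u 0 b - u 2 b * u 1 b) - (u 3 a * u 0 a - u 2 a * u 1 a) := by
    refine integral_eq_sub_of_hasDerivAt_of_le (f := u 3 * u 0 - u 2 * u 1) hab
      (((hcont 3 (by norm_num)).mul (hcont 0 (by norm_num))).sub
        ((hcont 2 (by norm_num)).mul (hcont 1 (by norm_num))))
      (fun x hx => ?_) ((hint 4 le_rfl 0 (by norm_num)).sub (hint 2 (by norm_num) 2 (by norm_num)))
    convert ((hderiv 3 (by norm_num) x hx).mul (hderiv 0 (by norm_num) x hx)).sub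
      ((hderiv 2 (by norm_num) x hx).mul (hderiv 1 (by norm_num) x hx)) using 1
    simp only [Nat.reduceAdd]
    ring
  rw [integral_sub (hint 4 le_rfl 0 (by norm_num)) (hint 2 (by norm_num) 2 (by norm_num))]
    at hftc
  simp only [sq]
  linear_combination hftc

theorem integral_deriv_six_mul_eq (hab : a ≤ b)
    (hcont : ∀ m ≤ 6, ContinuousOn (u m) (Icc a b))
    (hderiv : ∀ m < 6, ∀ x ∈ Ioo a b, HasDerivAt (u m) (u (m + 1) x) x) :
    ∫ x in a..b, u 6 x * u 0 x =
      (u 5 b * u 0 b - u 4 b * u 1 b + u 3 b * u 2 b) -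
        (u 5 a * u 0 a - u 4 a * u 1 a + u 3 a * u 2 a) - ∫ x in a..b, u 3 x ^ 2 := by
  have hint : ∀ m ≤ 6, ∀ n ≤ 6, IntervalIntegrable (fun x => u m x * u n x) volume a b :=
    fun m hm n hn => ((hcont m hm).mul (hcont n hn)).intervalIntegrable_of_Icc hab
  have hftc : ∫ x in a..b, (u 6 x * u 0 x + u 3 x * u 3 x) =
      (u 5 b * u 0 b - u 4 b * u 1 b + u 3 b * u 2 b) -
        (u 5 a * u 0 a - u 4 a * u 1 a + u 3 a * u 2 a) := by
    refine integral_eq_sub_of_hasDerivAt_of_le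
      (f := u 5 * u 0 - u 4 * u 1 + u 3 * u 2) hab
      ((((hcont 5 (by norm_num)).mul (hcont 0 (by norm_num))).sub
        ((hcont 4 (by norm_num)).mul (hcont 1 (by norm_num)))).add
        ((hcont 3 (by norm_num)).mul (hcont 2 (by norm_num))))
      (fun x hx => ?_) ((hint 6 le_rfl 0 (by norm_num)).add (hint 3 (by norm_num) 3 (by norm_num)))
    convert (((hderiv 5 (by norm_num) x hx).mul (hderiv 0 (by norm_num) x hx)).sub
      ((hderiv 4 (by norm_num) x hx).mul (hderiv 1 (by norm_num) x hx))).add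
      ((hderiv 3 (by norm_num) x hx).mul (hderiv 2 (by norm_num) x hx)) using 1
    simp only [Nat.reduceAdd]
    ring
  rw [integral_add (hint 6 le_rfl 0 (by norm_num)) (hint 3 (by norm_num) 3 (by norm_num))]
    at hftc
  simp only [sq]
  linear_combination hftc

end IntegrationByParts

section Dv

variable {n : ℕ} {m : ℕ} {φ : ℝ → ℝ}

theorem Dv_zero : Dv 0 φ = φ := iteratedDerivWithin_zero

theorem Dv_succ : Dv (m + 1) φ = derivWithin (Dv m φ) (Icc 0 1) := iteratedDerivWithin_succ

theorem continuousOn_Dv (hφ : ContDiffOn ℝ n φ (Icc 0 1)) (hm : m ≤ n) :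
    ContinuousOn (Dv m φ) (Icc 0 1) :=
  hφ.continuousOn_iteratedDerivWithin (by exact_mod_cast hm) (uniqueDiffOn_Icc zero_lt_one)

theorem differentiableOn_Dv (hφ : ContDiffOn ℝ n φ (Icc 0 1)) (hm : m < n) :
    DifferentiableOn ℝ (Dv m φ) (Icc 0 1) :=
  hφ.differentiableOn_iteratedDerivWithin (by exact_mod_cast hm) (uniqueDiffOn_Icc zero_lt_one)

theorem hasDerivAt_Dv (hφ : ContDiffOn ℝ n φ (Icc 0 1)) (hm : m < n) {x : ℝ}
    (hx : x ∈ Ioo 0 1) : HasDerivAt (Dv m φ) (Dv (m + 1) φ x) x := by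
  rw [Dv_succ]
  exact ((differentiableOn_Dv hφ hm x (Ioo_subset_Icc_self hx)).hasDerivWithinAt).hasDerivAt
    (Icc_mem_nhds hx.1 hx.2)

theorem eqOn_zero_of_Dv_succ (hφ : ContDiffOn ℝ (m + 1) φ (Icc 0 1)) (h0 : Dv m φ 0 = 0)
    (hD : EqOn (Dv (m + 1) φ) 0 (Icc 0 1)) : EqOn (Dv m φ) 0 (Icc 0 1) := by
  intro x hx
  have hconst := constant_of_derivWithin_zero (differentiableOn_Dv hφ m.lt_succ_self)
    fun y hy => by rw [← congrFun Dv_succ y]; exact hD (Ico_subset_Icc_self hy)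
  exact (hconst x hx).trans h0

theorem eqOn_zero_of_Dv_two (hφ : ContDiffOn ℝ 2 φ (Icc 0 1)) (h0 : φ 0 = 0)
    (h1 : Dv 1 φ 0 = 0) (hD : EqOn (Dv 2 φ) 0 (Icc 0 1)) : EqOn φ 0 (Icc 0 1) := by
  have hD1 := eqOn_zero_of_Dv_succ hφ h1 hD
  rw [← Dv_zero (φ := φ)] at h0 ⊢
  exact eqOn_zero_of_Dv_succ (hφ.of_le (by norm_num)) h0 hD1

end Dv

theorem BeamEigenpair.energy_identity {ζ μ : ℝ} {φ : ℝ → ℝ} (h : BeamEigenpair ζ μ φ) :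
    μ * ∫ x in (0 : ℝ)..1, φ x ^ 2 =
      (∫ x in (0 : ℝ)..1, Dv 2 φ x ^ 2) + ζ * ∫ x in (0 : ℝ)..1, Dv 3 φ x ^ 2 := by
  obtain ⟨hφ, ⟨b0, b1, b2, b3, b4, b5⟩, -, heq⟩ := h
  have hcont : ∀ m ≤ 6, ContinuousOn (Dv m φ) (Icc 0 1) :=
    fun m hm => continuousOn_Dv hφ (by exact_mod_cast hm)
  have hderiv : ∀ m < 6, ∀ x ∈ Ioo (0 : ℝ) 1, HasDerivAt (Dv m φ) (Dv (m + 1) φ x) x :=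
    fun m hm x hx => hasDerivAt_Dv hφ (by exact_mod_cast hm) hx
  have hint : ∀ m ≤ 6, IntervalIntegrable (fun x => Dv m φ x * φ x) volume 0 1 := fun m hm =>
    ((hcont m hm).mul hφ.continuousOn).intervalIntegrable_of_Icc zero_le_one
  have h4 := integral_deriv_four_mul_eq zero_le_one (fun m hm => hcont m (by omega))
    (fun m hm => hderiv m (by omega))
  have h6 := integral_deriv_six_mul_eq zero_le_one hcont hderiv
  simp only [Dv_zero, b0, b1, b2] at h4 h6
  have hweak : (∫ x in (0 : ℝ)..1, Dv 4 φ x * φ x) - ζ * ∫ x in (0 : ℝ)..1, Dv 6 φ x * φ x =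
      μ * ∫ x in (0 : ℝ)..1, φ x ^ 2 := by
    rw [← intervalIntegral.integral_const_mul, ← intervalIntegral.integral_const_mul,
      ← integral_sub (hint 4 (by norm_num)) ((hint 6 le_rfl).const_mul ζ)]
    refine integral_congr fun x hx => ?_
    rw [uIcc_of_le zero_le_one] at hx
    linear_combination φ x * heq x hx
  rw [← hweak, h4, h6]
  -- at `x = 1` the boundary terms are `φ (φ''' - ζ φ⁽⁵⁾) - φ' (φ'' - ζ φ⁽⁴⁾) - φ'' (ζ φ''')`
  linear_combination -φ 1 * b4 - Dv 1 φ 1 * b3 - Dv 2 φ 1 * b5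

/-- Every eigenvalue of the beam problem is positive. -/
theorem stmt_5 (ζ : ℝ) (hζ : 0 < ζ) (μ : ℝ) (φ : ℝ → ℝ)
    (h : BeamEigenpair ζ μ φ) : 0 < μ := by
  have henergy := h.energy_identity
  obtain ⟨hφ, ⟨b0, b1, -⟩, hne, -⟩ := h
  obtain ⟨c, hc, hc2⟩ : ∃ c ∈ Icc (0 : ℝ) 1, Dv 2 φ c ≠ 0 := by
    by_contra! hD
    exact hne (eqOn_zero_of_Dv_two (hφ.of_le (by norm_num)) b0 b1 hD)
  have hD2 : 0 < ∫ x in (0 : ℝ)..1, Dv 2 φ x ^ 2 :=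
    integral_pos zero_lt_one ((continuousOn_Dv hφ (by norm_num)).pow 2)
      (fun _ _ => sq_nonneg _) ⟨c, hc, by positivity⟩
  have hD3 : 0 ≤ ∫ x in (0 : ℝ)..1, Dv 3 φ x ^ 2 :=
    integral_nonneg zero_le_one fun _ _ => sq_nonneg _
  have hφ2 : 0 ≤ ∫ x in (0 : ℝ)..1, φ x ^ 2 :=
    integral_nonneg zero_le_one fun _ _ => sq_nonneg _
  refine pos_of_mul_pos_left ?_ hφ2
  rw [henergy]
  positivity
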